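/- arXiv:0708.0055 — 3 statements merged into one kernel-verified Lean document; each statement's English description precedes it below -/
import Mathlib

section
/- Let X be a nontrivial Banach space over ℝ or ℂ, let k ≥ 1, and let P : X → 𝕂 be a bounded k-homogeneous polynomial that strongly attains its norm at a point y ∈ S_X. Then the (k+1)-homogeneous polynomial Q(x) = y*(x)·P(x), where y* ∈ X* satisfies ‖y*‖ = y*(y) = 1, strongly attains its norm at y. -/
/-! Since `‖y*‖ = 1`, `|Q| ≤ |P|` on the unit ball, while `Q(y) = P(y)`. A maximizing sequence of
`P` has a subsequence converging to some `αy`, and `|P(αy)| = |P(y)|`, so `P` attains its norm at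
`y`; hence `‖Q‖ = ‖P‖`. Every maximizing sequence of `Q` is then squeezed into a maximizing
sequence of `P`, to which the hypothesis on `P` applies. -/

open Metric Filter Topology Set

/-- The sup norm of a function over the closed unit ball. -/
noncomputable def supNorm {X Y : Type*} [NormedAddCommGroup X] [NormedAddCommGroup Y]
    (f : X → Y) : ℝ :=
  sSup ((fun x => ‖f x‖) '' Metric.closedBall (0 : X) 1)

/-- `f` strongly attains its (sup) norm at `x₀`: every maximizing sequence in the closed unit
ball has a subsequence converging to a unimodular multiple of `x₀`. -/
def StronglyAttains (𝕂 : Type*) [RCLike 𝕂] {X Y : Type*} [NormedAddCommGroup X]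
    [NormedSpace 𝕂 X] [NormedAddCommGroup Y] (f : X → Y) (x₀ : X) : Prop :=
  ∀ xs : ℕ → X, (∀ n, xs n ∈ Metric.closedBall (0 : X) 1) →
    Tendsto (fun n => ‖f (xs n)‖) atTop (nhds (supNorm f)) →
    ∃ (α : 𝕂) (φ : ℕ → ℕ), StrictMono φ ∧ ‖α‖ = 1 ∧
      Tendsto (fun n => xs (φ n)) atTop (nhds (α • x₀))

/-- The `k`-homogeneous polynomial associated to a continuous `k`-multilinear map. -/
noncomputable def polyEval {𝕂 : Type*} [RCLike 𝕂] {X Y : Type*} [NormedAddCommGroup X]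
    [NormedSpace 𝕂 X] [NormedAddCommGroup Y] [NormedSpace 𝕂 Y] {k : ℕ}
    (L : ContinuousMultilinearMap 𝕂 (fun _ : Fin k => X) Y) : X → Y :=
  fun x => L (fun _ => x)

/-- The set `ρ̃𝒫(ᵏX)` of points of the closed unit ball at which some nonzero bounded
`k`-homogeneous scalar polynomial strongly attains its norm. -/
def polyAttainPts (𝕂 : Type*) [RCLike 𝕂] (X : Type*) [NormedAddCommGroup X]
    [NormedSpace 𝕂 X] (k : ℕ) : Set X :=
  {x₀ | x₀ ∈ Metric.closedBall (0 : X) 1 ∧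
    ∃ L : ContinuousMultilinearMap 𝕂 (fun _ : Fin k => X) 𝕂,
      polyEval L ≠ 0 ∧ StronglyAttains 𝕂 (polyEval L) x₀}

/-- Numerical radius `v(f) = sup { |x*(f x)| : (x, x*) ∈ Π(X) }`. -/
noncomputable def numRadius (𝕂 : Type*) [RCLike 𝕂] {X : Type*} [NormedAddCommGroup X]
    [NormedSpace 𝕂 X] (f : X → X) : ℝ :=
  sSup {r | ∃ (x : X) (x' : X →L[𝕂] 𝕂), ‖x‖ = 1 ∧ ‖x'‖ = 1 ∧ x' x = 1 ∧ r = ‖x' (f x)‖}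

/-- The `k`-polynomial numerical index `n^(k)(X)`. -/
noncomputable def polyNumIndex (𝕂 : Type*) [RCLike 𝕂] (X : Type*) [NormedAddCommGroup X]
    [NormedSpace 𝕂 X] (k : ℕ) : ℝ :=
  sInf {r | ∃ L : ContinuousMultilinearMap 𝕂 (fun _ : Fin k => X) X,
    supNorm (polyEval L) = 1 ∧ r = numRadius 𝕂 (polyEval L)}

/-- The numerical index `n(X)` of a Banach space. -/
noncomputable def numIndex (𝕂 : Type*) [RCLike 𝕂] (X : Type*) [NormedAddCommGroup X]
    [NormedSpace 𝕂 X] : ℝ :=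
  sInf {r | ∃ T : X →L[𝕂] X, ‖T‖ = 1 ∧ r = numRadius 𝕂 (⇑T)}

/-- `x` is an extreme point of the convex set `s` : `y + z = 2x` with `y, z ∈ s` forces
`y = z = x`. -/
def IsExtremePt {E : Type*} [AddCommGroup E] (s : Set E) (x : E) : Prop :=
  x ∈ s ∧ ∀ y ∈ s, ∀ z ∈ s, y + z = x + x → y = x ∧ z = x

/-- `x` is a strongly exposed point of the closed unit ball. -/
def StronglyExposedPt (𝕂 : Type*) [RCLike 𝕂] {X : Type*} [NormedAddCommGroup X]
    [NormedSpace 𝕂 X] (x : X) : Prop :=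
  x ∈ Metric.closedBall (0 : X) 1 ∧ ∃ x' : X →L[𝕂] 𝕂, x' ≠ 0 ∧ ‖x'‖ ≤ 1 ∧
    (∀ y ∈ Metric.closedBall (0 : X) 1, RCLike.re (x' y) ≤ RCLike.re (x' x)) ∧
    ∀ xs : ℕ → X, (∀ n, xs n ∈ Metric.closedBall (0 : X) 1) →
      Tendsto (fun n => RCLike.re (x' (xs n))) atTop (nhds (RCLike.re (x' x))) →
      Tendsto xs atTop (nhds x)

/-- `x'` is a weak-* exposed point of the dual unit ball. -/
def WeakStarExposed (𝕂 : Type*) [RCLike 𝕂] {X : Type*} [NormedAddCommGroup X]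
    [NormedSpace 𝕂 X] (x' : X →L[𝕂] 𝕂) : Prop :=
  ‖x'‖ ≤ 1 ∧ ∃ x ∈ Metric.closedBall (0 : X) 1, x' x = 1 ∧
    ∀ y' : X →L[𝕂] 𝕂, ‖y'‖ ≤ 1 → y' x = 1 → y' = x'

/-- `f` is a strong peak function at `x₀`: `f` is nonzero on the ball and every maximizing
sequence in the closed unit ball converges to `x₀`. -/
def StrongPeakAt {X Y : Type*} [NormedAddCommGroup X] [NormedAddCommGroup Y]
    (f : X → Y) (x₀ : X) : Prop :=
  (∃ x ∈ Metric.closedBall (0 : X) 1, f x ≠ 0) ∧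
    ∀ xs : ℕ → X, (∀ n, xs n ∈ Metric.closedBall (0 : X) 1) →
      Tendsto (fun n => ‖f (xs n)‖) atTop (nhds (supNorm f)) →
      Tendsto xs atTop (nhds x₀)

/-- Complex extreme point of the closed unit ball. -/
def ComplexExtremePoint {X : Type*} [NormedAddCommGroup X] [NormedSpace ℂ X] (x : X) : Prop :=
  x ∈ Metric.closedBall (0 : X) 1 ∧
    ∀ y : X, (∀ θ : ℝ, ‖x + Complex.exp (θ * Complex.I) • y‖ ≤ 1) → y = 0

/-- Membership in `A_b(B_X : Y)`: bounded, continuous on the closed unit ball and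
holomorphic on the open unit ball. -/
def MemAb {X Y : Type*} [NormedAddCommGroup X] [NormedSpace ℂ X] [NormedAddCommGroup Y]
    [NormedSpace ℂ Y] (f : X → Y) : Prop :=
  ContinuousOn f (Metric.closedBall (0 : X) 1) ∧
    (∃ C, ∀ x ∈ Metric.closedBall (0 : X) 1, ‖f x‖ ≤ C) ∧
    DifferentiableOn ℂ f (Metric.ball (0 : X) 1)

/-- Membership in `A_u(B_X : Y)`: additionally uniformly continuous on the closed ball. -/
def MemAu {X Y : Type*} [NormedAddCommGroup X] [NormedSpace ℂ X] [NormedAddCommGroup Y]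
    [NormedSpace ℂ Y] (f : X → Y) : Prop :=
  MemAb f ∧ UniformContinuousOn f (Metric.closedBall (0 : X) 1)

/-- The set `ρA_u(B_X)` of strong peak points of `A_u(B_X)`. -/
def strongPeakPtsAu (X : Type*) [NormedAddCommGroup X] [NormedSpace ℂ X] : Set X :=
  {x₀ | ∃ f : X → ℂ, MemAu f ∧ StrongPeakAt f x₀}

/-- The holomorphic numerical index `n_u(X)`. -/
noncomputable def holNumIndex (X : Type*) [NormedAddCommGroup X] [NormedSpace ℂ X] : ℝ :=
  sInf {r | ∃ f : X → X, MemAu f ∧ supNorm f = 1 ∧ r = numRadius ℂ f}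

section SupNorm

variable {X Y : Type*} [NormedAddCommGroup X] [NormedAddCommGroup Y] {f g : X → Y}

theorem norm_le_supNorm (hf : BddAbove ((fun x => ‖f x‖) '' closedBall (0 : X) 1)) {x : X}
    (hx : x ∈ closedBall (0 : X) 1) : ‖f x‖ ≤ supNorm f :=
  le_csSup hf (mem_image_of_mem _ hx)

theorem supNorm_le {C : ℝ} (h : ∀ x ∈ closedBall (0 : X) 1, ‖f x‖ ≤ C) : supNorm f ≤ C :=
  csSup_le ((nonempty_closedBall.2 zero_le_one).image _) (forall_mem_image.2 h)

theorem exists_seq_tendsto_supNorm (hf : BddAbove ((fun x => ‖f x‖) '' closedBall (0 : X) 1)) :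
    ∃ xs : ℕ → X, (∀ n, xs n ∈ closedBall (0 : X) 1) ∧
      Tendsto (fun n => ‖f (xs n)‖) atTop (𝓝 (supNorm f)) := by
  obtain ⟨u, -, hu, hmem⟩ :=
    exists_seq_tendsto_sSup ((nonempty_closedBall.2 zero_le_one).image _) hf
  choose xs hxs hfxs using hmem
  exact ⟨xs, hxs, by simp only [hfxs]; exact hu⟩

theorem supNorm_eq_of_norm_le (hf : BddAbove ((fun x => ‖f x‖) '' closedBall (0 : X) 1))
    (hgf : ∀ x ∈ closedBall (0 : X) 1, ‖g x‖ ≤ ‖f x‖) {x₀ : X}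
    (hx₀ : x₀ ∈ closedBall (0 : X) 1) (hgx₀ : ‖g x₀‖ = supNorm f) : supNorm g = supNorm f := by
  have hg_le : ∀ x ∈ closedBall (0 : X) 1, ‖g x‖ ≤ supNorm f := fun x hx =>
    (hgf x hx).trans (norm_le_supNorm hf hx)
  exact le_antisymm (supNorm_le hg_le)
    (hgx₀ ▸ norm_le_supNorm ⟨supNorm f, forall_mem_image.2 hg_le⟩ hx₀)

variable {𝕂 : Type*} [RCLike 𝕂] [NormedSpace 𝕂 X] {x₀ : X}

theorem StronglyAttains.norm_eq_supNorm (hatt : StronglyAttains 𝕂 f x₀) (hc : Continuous f)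
    (hf : BddAbove ((fun x => ‖f x‖) '' closedBall (0 : X) 1))
    (hbal : ∀ (α : 𝕂) (x : X), ‖α‖ = 1 → ‖f (α • x)‖ = ‖f x‖) : ‖f x₀‖ = supNorm f := by
  obtain ⟨xs, hxs, hlim⟩ := exists_seq_tendsto_supNorm hf
  obtain ⟨α, φ, hφ, hα, hconv⟩ := hatt xs hxs hlim
  rw [← hbal α x₀ hα]
  exact tendsto_nhds_unique ((hc.norm.tendsto _).comp hconv) (hlim.comp hφ.tendsto_atTop)

theorem StronglyAttains.of_norm_le (hatt : StronglyAttains 𝕂 f x₀)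
    (hf : BddAbove ((fun x => ‖f x‖) '' closedBall (0 : X) 1))
    (hgf : ∀ x ∈ closedBall (0 : X) 1, ‖g x‖ ≤ ‖f x‖) (hsup : supNorm g = supNorm f) :
    StronglyAttains 𝕂 g x₀ := fun xs hxs hg =>
  hatt xs hxs <| tendsto_of_tendsto_of_tendsto_of_le_of_le (hsup ▸ hg) tendsto_const_nhds
    (fun n => hgf _ (hxs n)) (fun n => norm_le_supNorm hf (hxs n))

end SupNorm

section Polynomial

variable {𝕂 X Y : Type*} [RCLike 𝕂] [NormedAddCommGroup X] [NormedSpace 𝕂 X]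
  [NormedAddCommGroup Y] [NormedSpace 𝕂 Y] {k : ℕ}
  (L : ContinuousMultilinearMap 𝕂 (fun _ : Fin k => X) Y)

theorem continuous_polyEval : Continuous (polyEval L) :=
  L.coe_continuous.comp (continuous_pi fun _ => continuous_id)

theorem polyEval_smul (c : 𝕂) (x : X) : polyEval L (c • x) = c ^ k • polyEval L x := by
  simpa only [polyEval, Finset.prod_const, Finset.card_univ, Fintype.card_fin] using
    L.map_smul_univ (fun _ => c) (fun _ => x)

theorem norm_polyEval_smul_of_norm_eq_one {c : 𝕂} (hc : ‖c‖ = 1) (x : X) :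
    ‖polyEval L (c • x)‖ = ‖polyEval L x‖ := by
  rw [polyEval_smul, norm_smul, norm_pow, hc, one_pow, one_mul]

theorem bddAbove_norm_polyEval :
    BddAbove ((fun x => ‖polyEval L x‖) '' closedBall (0 : X) 1) := by
  refine ⟨‖L‖, forall_mem_image.2 fun x hx => ?_⟩
  show ‖L fun _ => x‖ ≤ ‖L‖
  simpa only [Finset.prod_const_one, mul_one] using
    L.le_opNorm_mul_prod_of_le (b := fun _ => 1) fun _ => mem_closedBall_zero_iff.1 hx

end Polynomial

theorem polyEval_uncurryLeft_smulRight {𝕂 X : Type*} [RCLike 𝕂] [NormedAddCommGroup X]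
    [NormedSpace 𝕂 X] {k : ℕ} (y' : X →L[𝕂] 𝕂)
    (L : ContinuousMultilinearMap 𝕂 (fun _ : Fin k => X) 𝕂) :
    polyEval ((y'.smulRight L).uncurryLeft :
      ContinuousMultilinearMap 𝕂 (fun _ : Fin (k + 1) => X) 𝕂) = fun x => y' x * polyEval L x :=
  rfl

theorem statement0_general {𝕂 X : Type*} [RCLike 𝕂] [NormedAddCommGroup X] [NormedSpace 𝕂 X]
    {k : ℕ}
    (L : ContinuousMultilinearMap 𝕂 (fun _ : Fin k => X) 𝕂)
    (y : X) (hy : ‖y‖ = 1)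
    (hatt : StronglyAttains 𝕂 (polyEval L) y)
    (y' : X →L[𝕂] 𝕂) (hy'n : ‖y'‖ = 1) (hy'y : y' y = 1) :
    StronglyAttains 𝕂 (fun x => y' x * L (fun _ => x)) y ∧
      ∃ M : ContinuousMultilinearMap 𝕂 (fun _ : Fin (k + 1) => X) 𝕂,
        polyEval M = fun x => y' x * L (fun _ => x) := by
  have hP_bdd := bddAbove_norm_polyEval L
  have hQ_le_P : ∀ x ∈ closedBall (0 : X) 1, ‖y' x * L (fun _ => x)‖ ≤ ‖polyEval L x‖ := by
    intro x hx
    have hy'x : ‖y' x‖ ≤ 1 := (y'.le_opNorm x).trans <| by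
      rw [hy'n, one_mul]
      exact mem_closedBall_zero_iff.1 hx
    rw [norm_mul]
    exact mul_le_of_le_one_left (norm_nonneg _) hy'x
  have hPy : ‖polyEval L y‖ = supNorm (polyEval L) :=
    hatt.norm_eq_supNorm (continuous_polyEval L) hP_bdd fun _ x hα =>
      norm_polyEval_smul_of_norm_eq_one L hα x
  have hsup : supNorm (fun x => y' x * L (fun _ => x)) = supNorm (polyEval L) :=
    supNorm_eq_of_norm_le hP_bdd hQ_le_P (mem_closedBall_zero_iff.2 hy.le)
      (by rw [hy'y, one_mul]; exact hPy)
  exact ⟨hatt.of_norm_le hP_bdd hQ_le_P hsup, _, polyEval_uncurryLeft_smulRight y' L⟩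

/-- If a nonzero bounded `k`-homogeneous scalar polynomial `P` strongly attains
its norm at `y ∈ S_X` and `y*` is a norming functional of `y`, then the `(k+1)`-homogeneous
polynomial `Q(x) = y*(x) · P(x)` strongly attains its norm at `y`. -/
theorem statement0 {𝕂 X : Type*} [RCLike 𝕂] [NormedAddCommGroup X] [NormedSpace 𝕂 X]
    [CompleteSpace X] [Nontrivial X] {k : ℕ} (hk : 1 ≤ k)
    (L : ContinuousMultilinearMap 𝕂 (fun _ : Fin k => X) 𝕂)
    (hL : polyEval L ≠ 0) (y : X) (hy : ‖y‖ = 1)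
    (hatt : StronglyAttains 𝕂 (polyEval L) y)
    (y' : X →L[𝕂] 𝕂) (hy'n : ‖y'‖ = 1) (hy'y : y' y = 1) :
    StronglyAttains 𝕂 (fun x => y' x * L (fun _ => x)) y ∧
      ∃ M : ContinuousMultilinearMap 𝕂 (fun _ : Fin (k + 1) => X) 𝕂,
        polyEval M = fun x => y' x * L (fun _ => x) :=
  statement0_general L y hy hatt y' hy'n hy'y
end

section
/- Let X, Y be Banach spaces, k ≥ 1, and suppose every P ∈ 𝒫(ᵏX : Y) is a limit of strongly norm-attaining polynomials. If A ⊆ B_X is any closed balanced norming subset for 𝒫(ᵏX : Y), then the closure of ρ̃𝒫(ᵏX) is contained in A; hence the closure of ρ̃𝒫(ᵏX) is the smallest closed balanced norming subset of B_X for 𝒫(ᵏX : Y). -/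
open Metric Filter Topology Set

/-- under the same approximation hypothesis, the closure of `ρ̃𝒫(ᵏX)` is
contained in every closed balanced norming subset `A` of `B_X` for `𝒫(ᵏX : Y)`; i.e. it is
the smallest such set. -/
theorem statement4 {𝕂 X Y : Type*} [RCLike 𝕂] [NormedAddCommGroup X] [NormedSpace 𝕂 X]
    [NormedAddCommGroup Y] [NormedSpace 𝕂 Y] [CompleteSpace X] [CompleteSpace Y]
    {k : ℕ} (hk : 1 ≤ k)
    (happrox : ∀ P : ContinuousMultilinearMap 𝕂 (fun _ : Fin k => X) Y, ∀ ε > (0 : ℝ),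
      ∃ (Q : ContinuousMultilinearMap 𝕂 (fun _ : Fin k => X) Y) (x₀ : X),
        StronglyAttains 𝕂 (polyEval Q) x₀ ∧
          ∀ x ∈ Metric.closedBall (0 : X) 1, ‖polyEval P x - polyEval Q x‖ ≤ ε)
    (A : Set X) (hAsub : A ⊆ Metric.closedBall (0 : X) 1) (hAclosed : IsClosed A)
    (hAbal : ∀ lam : 𝕂, ‖lam‖ = 1 → ∀ x ∈ A, lam • x ∈ A)
    (hAnorm : ∀ P : ContinuousMultilinearMap 𝕂 (fun _ : Fin k => X) Y,
      supNorm (polyEval P) = sSup ((fun x => ‖polyEval P x‖) '' A)) :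
    closure (polyAttainPts 𝕂 X k) ⊆ A := by
  apply closure_minimal _ hAclosed
  rintro x₀ ⟨hx₀ball, L, hL0, hLs⟩
  by_cases hY : ∃ y : Y, y ≠ 0
  · -- nontrivial Y
    obtain ⟨y, hy⟩ := hY
    set y' : Y := (‖y‖ : 𝕂)⁻¹ • y with hy'def
    have hy' : ‖y'‖ = 1 := norm_smul_inv_norm hy
    set P : ContinuousMultilinearMap 𝕂 (fun _ : Fin k => X) Y := L.smulRight y' with hPdef
    have hpt : (fun x => ‖polyEval P x‖) = fun x => ‖polyEval L x‖ := by
      funext x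
      simp [polyEval, hPdef, norm_smul, hy']
    have hsup : supNorm (polyEval P) = supNorm (polyEval L) := by
      unfold supNorm; rw [hpt]
    -- bound on the unit ball
    have hbd : ∀ x ∈ Metric.closedBall (0 : X) 1, ‖polyEval L x‖ ≤ ‖L‖ := by
      intro x hx
      rw [Metric.mem_closedBall, dist_zero_right] at hx
      calc ‖polyEval L x‖ ≤ ‖L‖ * ∏ _i : Fin k, ‖x‖ := L.le_opNorm _
        _ ≤ ‖L‖ * 1 := by
            apply mul_le_mul_of_nonneg_left _ (norm_nonneg L)
            exact Finset.prod_le_one (fun _ _ => norm_nonneg x) (fun _ _ => hx)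
        _ = ‖L‖ := mul_one _
    -- supNorm (polyEval L) > 0
    have hM : 0 < supNorm (polyEval L) := by
      obtain ⟨x, hx⟩ : ∃ x, polyEval L x ≠ 0 := by
        by_contra h
        push_neg at h
        exact hL0 (funext h)
      set c : 𝕂 := ((max ‖x‖ 1 : ℝ) : 𝕂)⁻¹ with hcdef
      have hmaxpos : (0:ℝ) < max ‖x‖ 1 := lt_of_lt_of_le one_pos (le_max_right _ _)
      have hc0 : c ≠ 0 := by
        simp only [hcdef, ne_eq, inv_eq_zero, RCLike.ofReal_eq_zero]
        exact ne_of_gt hmaxpos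
      have hzball : c • x ∈ Metric.closedBall (0 : X) 1 := by
        rw [Metric.mem_closedBall, dist_zero_right, norm_smul, hcdef, norm_inv,
          RCLike.norm_ofReal, abs_of_pos hmaxpos]
        rw [inv_mul_le_iff₀ hmaxpos, mul_one]
        exact le_max_left _ _
      have hLz : polyEval L (c • x) ≠ 0 := by
        have : polyEval L (c • x) = (c ^ k) • polyEval L x := by
          unfold polyEval
          have := L.map_smul_univ (fun _ : Fin k => c) (fun _ : Fin k => x)
          simpa [Finset.prod_const] using this
        rw [this]
        exact smul_ne_zero (pow_ne_zero _ hc0) hx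
      have hmem : ‖polyEval L (c • x)‖ ∈ (fun x => ‖polyEval L x‖) '' Metric.closedBall (0:X) 1 :=
        ⟨c • x, hzball, rfl⟩
      have hbdd : BddAbove ((fun x => ‖polyEval L x‖) '' Metric.closedBall (0:X) 1) :=
        ⟨‖L‖, by rintro r ⟨z, hz, rfl⟩; exact hbd z hz⟩
      calc (0:ℝ) < ‖polyEval L (c • x)‖ := norm_pos_iff.mpr hLz
        _ ≤ supNorm (polyEval L) := le_csSup hbdd hmem
    -- A is nonempty
    rcases A.eq_empty_or_nonempty with rfl | hAne
    · exfalso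
      have := hAnorm P
      rw [Set.image_empty, Real.sSup_empty, hsup] at this
      linarith
    -- maximizing sequence in A
    have hSA : sSup ((fun x => ‖polyEval L x‖) '' A) = supNorm (polyEval L) := by
      rw [← hpt, ← hAnorm P, hsup]
    obtain ⟨u, _humono, hulim, humem⟩ :=
      exists_seq_tendsto_sSup (hAne.image (fun x => ‖polyEval L x‖))
        ⟨‖L‖, by rintro r ⟨z, hz, rfl⟩; exact hbd z (hAsub hz)⟩
    rw [hSA] at hulim
    choose a ha hua using humem
    obtain ⟨α, φ, _hφ, hα, hconv⟩ := hLs a (fun n => hAsub (ha n)) (by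
      have : (fun n => ‖polyEval L (a n)‖) = u := funext hua
      rw [this]; exact hulim)
    have hαx₀ : α • x₀ ∈ A :=
      hAclosed.mem_of_tendsto hconv (Filter.Eventually.of_forall (fun n => ha (φ n)))
    have hαne : α ≠ 0 := by
      intro h; rw [h, norm_zero] at hα; exact zero_ne_one hα
    have := hAbal α⁻¹ (by rw [norm_inv, hα, inv_one]) _ hαx₀
    rwa [inv_smul_smul₀ hαne] at this
  · -- trivial Y : derive a contradiction
    exfalso
    push_neg at hY
    obtain ⟨Q, x₁, hQ, -⟩ := happrox 0 1 one_pos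
    have hQ0 : ∀ x, polyEval Q x = 0 := fun x => hY _
    have hsupQ : supNorm (polyEval Q) = 0 := by
      unfold supNorm
      have h1 : (fun x : X => ‖polyEval Q x‖) = fun _ => (0:ℝ) := by
        funext x; rw [hQ0]; simp
      rw [h1, Set.Nonempty.image_const ⟨0, Metric.mem_closedBall_self zero_le_one⟩,
        csSup_singleton]
    have hmax : ∀ x : X, Filter.Tendsto (fun _ : ℕ => ‖polyEval Q x‖) Filter.atTop
        (nhds (supNorm (polyEval Q))) := by
      intro x
      rw [hsupQ, hQ0, norm_zero]
      exact tendsto_const_nhds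
    have hx₁ : x₁ = 0 := by
      obtain ⟨α, φ, _, hα, hconv⟩ :=
        hQ (fun _ => 0) (fun _ => Metric.mem_closedBall_self zero_le_one) (hmax 0)
      have h0 : (0 : X) = α • x₁ := tendsto_nhds_unique tendsto_const_nhds hconv
      have hαne : α ≠ 0 := by intro h; rw [h, norm_zero] at hα; exact zero_ne_one hα
      exact ((smul_eq_zero.mp h0.symm).resolve_left hαne)
    have hball : ∀ x ∈ Metric.closedBall (0 : X) 1, x = 0 := by
      intro x hx
      obtain ⟨α, φ, _, hα, hconv⟩ := hQ (fun _ => x) (fun _ => hx) (hmax x)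
      have h0 : x = α • x₁ := tendsto_nhds_unique tendsto_const_nhds hconv
      rw [h0, hx₁, smul_zero]
    apply hL0
    funext x
    have hx0 : x = 0 := by
      set c : 𝕂 := ((1 + ‖x‖ : ℝ) : 𝕂)⁻¹ with hcdef
      have hpos : (0:ℝ) < 1 + ‖x‖ := by positivity
      have hc0 : c ≠ 0 := by
        simp only [hcdef, ne_eq, inv_eq_zero, RCLike.ofReal_eq_zero]
        exact ne_of_gt hpos
      have hmem : c • x ∈ Metric.closedBall (0 : X) 1 := by
        rw [Metric.mem_closedBall, dist_zero_right, norm_smul, hcdef, norm_inv,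
          RCLike.norm_ofReal, abs_of_pos hpos]
        rw [inv_mul_le_iff₀ hpos, mul_one]
        linarith
      have := hball _ hmem
      exact (smul_eq_zero.mp this).resolve_left hc0
    rw [hx0]
    show L (fun _ => (0:X)) = 0
    exact L.map_coord_zero ⟨0, hk⟩ rfl
end

section
/- Let X be a real finite-dimensional Banach space with 2-polynomial numerical index n^(2)(X) = 1. Then X = ℝ (i.e., dim X = 1). -/
open Metric Filter Topology Set

/-!
Suppose `X ≠ 0`. By Rademacher's theorem the norm is differentiable at some unit vector `x₀`,
so `x₀` has a unique supporting functional `f`. Given a unit vector `y`, let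
`P x = (f x ^ 2 - ε E x) • y`, where `E ≥ 0` is a quadratic form vanishing exactly on `ℝ x₀`
and `ε > 0` is small. Then `‖P‖ = 1` and `|f x ^ 2 - ε E x| = 1` on the unit ball only at
`±x₀`. As `n⁽²⁾(X) = 1`, `v(P) ≥ 1`, and by compactness `v(P)` is attained at some
`(x, x*) ∈ Π(X)`; this forces `x = ±x₀`, hence `x* = ±f`, and `|f y| = |x* y| = 1`. So `f`
vanishes only at `0` and `dim X = 1`. If `X = 0`, the infimum defining `n⁽²⁾(X)` is over the
empty set, hence `0`.
-/

section PolyEval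

variable {𝕂 : Type*} [RCLike 𝕂] {X Y : Type*} [NormedAddCommGroup X] [NormedSpace 𝕂 X]
  [NormedAddCommGroup Y] [NormedSpace 𝕂 Y] {k : ℕ}

lemma continuous_polyEval_s10 (L : ContinuousMultilinearMap 𝕂 (fun _ : Fin k => X) Y) :
    Continuous (polyEval L) :=
  L.cont.comp (continuous_pi fun _ => continuous_id)

lemma norm_polyEval_le (L : ContinuousMultilinearMap 𝕂 (fun _ : Fin k => X) Y) (x : X) :
    ‖polyEval L x‖ ≤ ‖L‖ * ‖x‖ ^ k := by
  simpa [polyEval] using L.le_opNorm fun _ => x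

lemma polyEval_smulRight (L : ContinuousMultilinearMap 𝕂 (fun _ : Fin k => X) 𝕂) (y : Y)
    (x : X) : polyEval (L.smulRight y) x = polyEval L x • y :=
  rfl

lemma polyEval_compContinuousLinearMap (L : ContinuousMultilinearMap 𝕂 (fun _ : Fin k => X) Y)
    (T : X →L[𝕂] X) (x : X) :
    polyEval (L.compContinuousLinearMap fun _ => T) x = polyEval L (T x) :=
  rfl

lemma supNorm_eq_of_isGreatest {f : X → Y} {c : ℝ} (hle : ∀ x, ‖x‖ ≤ 1 → ‖f x‖ ≤ c)
    {x₀ : X} (hx₀ : ‖x₀‖ ≤ 1) (hfx₀ : ‖f x₀‖ = c) : supNorm f = c := by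
  refine IsGreatest.csSup_eq ⟨⟨x₀, by simpa using hx₀, hfx₀⟩, ?_⟩
  rintro _ ⟨x, hx, rfl⟩
  exact hle x (by simpa using hx)

lemma polyNumIndex_le_numRadius {L : ContinuousMultilinearMap 𝕂 (fun _ : Fin k => X) X}
    (hL : supNorm (polyEval L) = 1) : polyNumIndex 𝕂 X k ≤ numRadius 𝕂 (polyEval L) := by
  refine csInf_le ⟨0, ?_⟩ ⟨L, hL, rfl⟩
  rintro _ ⟨L', -, rfl⟩
  exact Real.sSup_nonneg (by rintro _ ⟨x, x', -, -, -, rfl⟩; exact norm_nonneg _)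

lemma nontrivial_of_polyNumIndex_ne_zero (h : polyNumIndex 𝕂 X k ≠ 0) : Nontrivial X := by
  by_contra hX
  rw [not_nontrivial_iff_subsingleton] at hX
  refine h ?_
  rw [polyNumIndex, ← Real.sInf_empty]
  congr
  refine Set.eq_empty_of_forall_notMem ?_
  rintro _ ⟨L, hL, -⟩
  have hzero (x : X) : polyEval L x = 0 := Subsingleton.elim _ _
  have : supNorm (polyEval L) = 0 :=
    supNorm_eq_of_isGreatest (fun x _ => by simp [hzero]) (x₀ := 0) (by simp) (by simp [hzero])
  simp [this] at hL

end PolyEval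

section NormingPairs

variable (𝕂 : Type*) [RCLike 𝕂] (X : Type*) [NormedAddCommGroup X] [NormedSpace 𝕂 X]

/-- The set `Π(X)` over which `numRadius` takes its supremum. -/
def normingPairs : Set (X × (X →L[𝕂] 𝕂)) :=
  {p | ‖p.1‖ = 1 ∧ ‖p.2‖ = 1 ∧ p.2 p.1 = 1}

variable {𝕂 X}

lemma numRadius_eq_sSup_image (f : X → X) :
    numRadius 𝕂 f = sSup ((fun p => ‖p.2 (f p.1)‖) '' normingPairs 𝕂 X) := by
  rw [numRadius]
  congr 1
  ext r
  simp [normingPairs, eq_comm, and_assoc]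

lemma normingPairs_nonempty [Nontrivial X] : (normingPairs 𝕂 X).Nonempty := by
  let : NormedSpace ℝ X := NormedSpace.restrictScalars ℝ 𝕂 X
  obtain ⟨x, hx⟩ := exists_norm_eq X zero_le_one
  obtain ⟨g, hg, hgx⟩ := exists_dual_vector 𝕂 x (by simp [hx])
  exact ⟨(x, g), hx, hg, by simp [hgx, hx]⟩

lemma isCompact_normingPairs [FiniteDimensional 𝕂 X] : IsCompact (normingPairs 𝕂 X) := by
  have := FiniteDimensional.proper_rclike 𝕂 X
  have := FiniteDimensional.proper_rclike 𝕂 (X →L[𝕂] 𝕂)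
  refine ((isCompact_sphere (0 : X) 1).prod (isCompact_sphere (0 : X →L[𝕂] 𝕂) 1))
    |>.of_isClosed_subset ?_ fun p hp => ⟨by simpa using hp.1, by simpa using hp.2.1⟩
  exact (isClosed_eq continuous_fst.norm continuous_const).inter <|
    (isClosed_eq continuous_snd.norm continuous_const).inter <|
      isClosed_eq (isBoundedBilinearMap_apply.continuous.comp continuous_swap) continuous_const

lemma exists_mem_normingPairs_numRadius_eq [FiniteDimensional 𝕂 X] [Nontrivial X] {f : X → X}
    (hf : Continuous f) : ∃ p ∈ normingPairs 𝕂 X, ‖p.2 (f p.1)‖ = numRadius 𝕂 f := by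
  have hcont : Continuous fun p : X × (X →L[𝕂] 𝕂) => ‖p.2 (f p.1)‖ :=
    (isBoundedBilinearMap_apply.continuous.comp
      (continuous_snd.prodMk (hf.comp continuous_fst))).norm
  rw [numRadius_eq_sSup_image]
  exact ((isCompact_normingPairs.image hcont).sSup_mem (normingPairs_nonempty.image _))

end NormingPairs

section SmoothPoint

variable {X : Type*} [NormedAddCommGroup X] [NormedSpace ℝ X]

lemma eq_fderiv_norm_of_apply_eq_norm {x : X} (hx : DifferentiableAt ℝ (‖·‖) x)
    {x' : X →L[ℝ] ℝ} (hx' : ‖x'‖ ≤ 1) (hx'x : x' x = ‖x‖) : x' = fderiv ℝ (‖·‖) x := by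
  have hmin : IsLocalMin (fun z : X => ‖z‖ - x' z) x := by
    refine Filter.Eventually.of_forall fun z => ?_
    have : x' z ≤ ‖z‖ :=
      (le_abs_self _).trans ((x'.le_opNorm z).trans (mul_le_of_le_one_left (norm_nonneg _) hx'))
    simp only [hx'x, sub_self]
    linarith
  exact (sub_eq_zero.mp (hmin.hasFDerivAt_eq_zero (hx.hasFDerivAt.sub x'.hasFDerivAt))).symm

variable [FiniteDimensional ℝ X] [Nontrivial X]

lemma exists_unique_supporting_functional :
    ∃ x₀ : X, ‖x₀‖ = 1 ∧ ∃ f : X →L[ℝ] ℝ, ‖f‖ = 1 ∧ f x₀ = 1 ∧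
      ∀ x' : X →L[ℝ] ℝ, ‖x'‖ ≤ 1 → x' x₀ = 1 → x' = f := by
  obtain ⟨x, hxd, hx0⟩ := dense_differentiableAt_norm.exists_mem_open isOpen_ne
    (exists_ne (0 : X))
  have hxn : ‖x‖ ≠ 0 := norm_ne_zero_iff.mpr hx0
  set x₀ := ‖x‖⁻¹ • x
  have hx₀ : ‖x₀‖ = 1 := by simp [x₀, norm_smul, hxn]
  have hd : DifferentiableAt ℝ (‖·‖) x₀ := (differentiableAt_norm_smul (inv_ne_zero hxn)).1 hxd
  refine ⟨x₀, hx₀, fderiv ℝ (‖·‖) x₀, norm_fderiv_norm hd, by rw [hd.fderiv_norm_self, hx₀],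
    fun x' hx' hx'x₀ => eq_fderiv_norm_of_apply_eq_norm hd hx' (by rw [hx'x₀, hx₀])⟩

end SmoothPoint

section PeakForm

variable {X : Type*} [NormedAddCommGroup X] [NormedSpace ℝ X] [FiniteDimensional ℝ X]

lemma exists_polyEval_posDef :
    ∃ N : ContinuousMultilinearMap ℝ (fun _ : Fin 2 => X) ℝ,
      (∀ x, 0 ≤ polyEval N x) ∧ ∀ x, polyEval N x = 0 ↔ x = 0 := by
  let b := Module.finBasis ℝ X
  let N := ∑ i, (ContinuousMultilinearMap.mkPiAlgebra ℝ (Fin 2) ℝ).compContinuousLinearMap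
    fun _ => LinearMap.toContinuousLinearMap (b.coord i)
  have hN (x : X) : polyEval N x = ∑ i, b.coord i x ^ 2 := by
    simp [N, polyEval]
  refine ⟨N, fun x => hN x ▸ Finset.sum_nonneg fun i _ => sq_nonneg _, fun x => ?_⟩
  rw [hN, Finset.sum_eq_zero_iff_of_nonneg fun i _ => sq_nonneg _, ← b.forall_coord_eq_zero_iff]
  simp

/-- `f² - ε E`, where `E ≥ 0` vanishes exactly on the line through `x₀` and `ε` is small enough
that `ε E < 1` on the unit ball. -/
lemma exists_polyEval_peak {x₀ : X} {f : X →L[ℝ] ℝ} (hf : ‖f‖ ≤ 1) (hfx₀ : f x₀ = 1) :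
    ∃ M : ContinuousMultilinearMap ℝ (fun _ : Fin 2 => X) ℝ, polyEval M x₀ = 1 ∧
      (∀ x, ‖x‖ ≤ 1 → |polyEval M x| ≤ 1) ∧
      ∀ x, ‖x‖ ≤ 1 → |polyEval M x| = 1 → x = x₀ ∨ x = -x₀ := by
  obtain ⟨N, hN_nonneg, hN_eq_zero⟩ := exists_polyEval_posDef (X := X)
  let π := ContinuousLinearMap.id ℝ X - f.smulRight x₀
  have hπ (x : X) : π x = x - f x • x₀ := rfl
  let E := N.compContinuousLinearMap fun _ => π
  let ε := (‖E‖ + 1)⁻¹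
  have hε : 0 < ε := by positivity
  have hεE (x : X) (hx : ‖x‖ ≤ 1) : ε * polyEval N (π x) < 1 := by
    have hE := norm_polyEval_le E x
    rw [polyEval_compContinuousLinearMap, Real.norm_eq_abs] at hE
    have : polyEval N (π x) ≤ ‖E‖ := (le_abs_self _).trans (hE.trans
      (mul_le_of_le_one_right (norm_nonneg _) (pow_le_one₀ (norm_nonneg _) hx)))
    calc ε * polyEval N (π x) ≤ ε * ‖E‖ := by gcongr
      _ < 1 := by rw [inv_mul_lt_one₀ (by positivity)]; linarith
  have hfx (x : X) (hx : ‖x‖ ≤ 1) : f x ^ 2 ≤ 1 := by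
    rw [sq_le_one_iff_abs_le_one]
    exact (f.le_opNorm x).trans (mul_le_one₀ hf (norm_nonneg _) hx)
  let M := (ContinuousMultilinearMap.mkPiAlgebra ℝ (Fin 2) ℝ).compContinuousLinearMap
    (fun _ => f) - ε • E
  have hM (x : X) : polyEval M x = f x ^ 2 - ε * polyEval N (π x) := by
    simp [M, E, polyEval]
  have hM_gt (x : X) (hx : ‖x‖ ≤ 1) : -1 < polyEval M x := by
    have := hεE x hx
    rw [hM]
    nlinarith [sq_nonneg (f x)]
  have hM_le (x : X) (hx : ‖x‖ ≤ 1) : polyEval M x ≤ 1 := by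
    rw [hM]
    nlinarith [hfx x hx, hN_nonneg (π x)]
  refine ⟨M, by
    rw [hM, hπ, hfx₀, one_smul, sub_self, (hN_eq_zero 0).2 rfl]; simp,
    fun x hx => abs_le.mpr ⟨(hM_gt x hx).le, hM_le x hx⟩, fun x hx hMx => ?_⟩
  have hMx : polyEval M x = 1 := by
    rcases abs_eq (zero_le_one' ℝ) |>.mp hMx with h | h
    · exact h
    · exact absurd h (hM_gt x hx).ne'
  have hNx : polyEval N (π x) = 0 := by
    rw [hM] at hMx
    nlinarith [hfx x hx, hN_nonneg (π x)]
  have hx_eq : x = f x • x₀ := sub_eq_zero.mp ((hN_eq_zero _).1 hNx)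
  have hfx_sq : f x ^ 2 = 1 := by rw [hM, hNx] at hMx; linarith
  rcases sq_eq_one_iff.mp hfx_sq with h | h
  · exact .inl (by rw [hx_eq, h, one_smul])
  · exact .inr (by rw [hx_eq, h, neg_one_smul])

end PeakForm

section PolyNumIndexOne

variable {X : Type*} [NormedAddCommGroup X] [NormedSpace ℝ X] [FiniteDimensional ℝ X]

lemma abs_apply_eq_one_of_one_le_polyNumIndex (h : 1 ≤ polyNumIndex ℝ X 2) {x₀ : X}
    (hx₀ : ‖x₀‖ = 1) {f : X →L[ℝ] ℝ} (hf : ‖f‖ = 1) (hfx₀ : f x₀ = 1)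
    (huniq : ∀ x' : X →L[ℝ] ℝ, ‖x'‖ ≤ 1 → x' x₀ = 1 → x' = f) {y : X} (hy : ‖y‖ = 1) :
    |f y| = 1 := by
  have : Nontrivial X := nontrivial_of_ne x₀ 0 (by simp [← norm_ne_zero_iff, hx₀])
  obtain ⟨M, hMx₀, hM_le, hM_eq⟩ := exists_polyEval_peak hf.le hfx₀
  have hP (x : X) : ‖polyEval (M.smulRight y) x‖ = |polyEval M x| := by
    rw [polyEval_smulRight, norm_smul, hy, mul_one, Real.norm_eq_abs]
  have hsup : supNorm (polyEval (M.smulRight y)) = 1 :=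
    supNorm_eq_of_isGreatest (fun x hx => hP x ▸ hM_le x hx) hx₀.le (by simp [hP, hMx₀])
  obtain ⟨⟨x, x'⟩, ⟨hx, hx', hx'x⟩, hrad⟩ :=
    exists_mem_normingPairs_numRadius_eq (𝕂 := ℝ) (continuous_polyEval_s10 (M.smulRight y))
  have hone : 1 ≤ |polyEval M x| * |x' y| := by
    simpa [← hrad, polyEval_smulRight, abs_mul] using h.trans (polyNumIndex_le_numRadius hsup)
  have hMx := hM_le x hx.le
  have hx'y : |x' y| ≤ 1 := by simpa [hx', hy] using x'.le_opNorm y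
  have hMx_eq : |polyEval M x| = 1 :=
    le_antisymm hMx (hone.trans (mul_le_of_le_one_right (abs_nonneg _) hx'y))
  have hx'y_eq : |x' y| = 1 :=
    le_antisymm hx'y (hone.trans (mul_le_of_le_one_left (abs_nonneg _) hMx))
  rcases hM_eq x hx.le hMx_eq with rfl | rfl
  · rwa [← huniq x' hx'.le hx'x]
  · rw [← huniq (-x') (by rw [norm_neg, hx']) (by simpa using hx'x)]
    simpa using hx'y_eq

end PolyNumIndexOne

/-- a finite-dimensional real Banach space with `n^(2)(X) = 1` is
one-dimensional, i.e. `X = ℝ`. -/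
theorem statement10 {X : Type*} [NormedAddCommGroup X] [NormedSpace ℝ X]
    [FiniteDimensional ℝ X] (h : polyNumIndex ℝ X 2 = 1) :
    Module.finrank ℝ X = 1 := by
  have : Nontrivial X := nontrivial_of_polyNumIndex_ne_zero (h ▸ one_ne_zero)
  obtain ⟨x₀, hx₀, f, hf, hfx₀, huniq⟩ := exists_unique_supporting_functional (X := X)
  have hunit (y : X) (hy : ‖y‖ = 1) : |f y| = 1 :=
    abs_apply_eq_one_of_one_le_polyNumIndex h.ge hx₀ hf hfx₀ huniq hy
  have hinj : Function.Injective f := by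
    refine (injective_iff_map_eq_zero f).2 fun x hfx => ?_
    by_contra hx
    have := hunit (‖x‖⁻¹ • x) (norm_smul_inv_norm hx)
    simp [hfx] at this
  have := LinearMap.finrank_le_finrank_of_injective (f := f.toLinearMap) hinj
  rw [Module.finrank_self] at this
  exact le_antisymm this Module.finrank_pos
end
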